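/- arXiv:2010.12452 — 3 statements merged into one kernel-verified Lean document; each statement's English description precedes it below -/
import Mathlib

section
/- If a pca A is not extensional, then the relations ∼_α for α ≤ ω are pairwise distinct, even when restricted to elements of A. In particular, for each n there exist f, g ∈ A with f ∼_{n+1} g but f ≁_n g. -/
/-- A partial applicative structure: a set with a partial binary application. -/
structure PAS where
  carrier : Type
  app : carrier → carrier → Part carrier

namespace PAS

/-- Closed terms over a partial applicative structure. -/
inductive Term (A : PAS) : Type
  | const : A.carrier → Term A
  | app : Term A → Term A → Term A

/-- Evaluation of a closed term (a partial element of the carrier). -/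
def Term.eval {A : PAS} : Term A → Part A.carrier
  | .const a => Part.some a
  | .app s t => do
      let x ← Term.eval s
      let y ← Term.eval t
      A.app x y

/-- Kleene equality of closed terms: both undefined, or both defined and equal. -/
def KEq {A : PAS} (s t : Term A) : Prop := s.eval = t.eval

/-- The transfinite hierarchy of extensionality relations `∼_α` on closed terms:
`s ∼_0 t` iff `s ≃ t`; `s ∼_{α+1} t` iff `∀ x, s·x ∼_α t·x`; and at limits,
`s ∼_α t` iff `s ∼_β t` for some `β < α`. -/
noncomputable def sim (A : PAS) (α : Ordinal) : Term A → Term A → Prop :=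
  Ordinal.limitRecOn α
    (fun s t => KEq s t)
    (fun _ ih s t => ∀ x : A.carrier, ih (s.app (.const x)) (t.app (.const x)))
    (fun β _ ih s t => ∃ γ, ∃ h : γ < β, ih γ h s t)

end PAS

/-- A partial combinatory algebra: a partial applicative structure with
combinators `K` and `S` such that `K·a·b = a`, `S·a·b` is defined, and
`S·a·b·c ≃ a·c·(b·c)`. -/
structure PCA extends PAS where
  K : carrier
  S : carrier
  K_spec : ∀ a b : carrier, (app K a).bind (fun x => app x b) = Part.some a
  S_defined : ∀ a b : carrier, ((app S a).bind (fun x => app x b)).Dom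
  S_spec : ∀ a b c : carrier,
    ((app S a).bind (fun x => app x b)).bind (fun x => app x c)
      = (app a c).bind (fun u => (app b c).bind (fun v => app u v))

/-- A pca is extensional if f = g whenever f·x ≃ g·x for all x. -/
def PCA.Extensional (A : PCA) : Prop :=
  ∀ f g : A.carrier, (∀ x : A.carrier, A.app f x = A.app g x) → f = g

/-!
Non-extensionality gives `f ≠ g` with `f·x ≃ g·x` for all `x`, i.e. `f ∼_1 g` but `f ≁_0 g`.
Since `K·a·x = a`, we have `K·a ∼_{α+1} K·b ↔ a ∼_α b`, so the `n`-fold images of `f` and `g`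
under `K` are `∼_{n+1}`- but not `∼_n`-related. The hierarchy is monotone, so this pair is also
`∼_β`-related for every `β ≥ n + 1`, which separates `∼_n` from all `∼_β` with `n < β ≤ ω`.
-/

namespace PAS

variable {A : PAS}

@[simp]
lemma eval_const (a : A.carrier) : (Term.const a : Term A).eval = Part.some a := rfl

@[simp]
lemma eval_app_const_const (a b : A.carrier) :
    ((Term.const a).app (Term.const b) : Term A).eval = A.app a b := by
  simp [Term.eval]

lemma sim_zero_iff {s t : Term A} : A.sim 0 s t ↔ KEq s t := by
  simp [sim]

lemma sim_add_one_iff {α : Ordinal} {s t : Term A} :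
    A.sim (α + 1) s t ↔ ∀ x : A.carrier, A.sim α (s.app (.const x)) (t.app (.const x)) := by
  simp [sim]

lemma sim_limit_iff {α : Ordinal} (hα : Order.IsSuccLimit α) {s t : Term A} :
    A.sim α s t ↔ ∃ γ < α, A.sim γ s t := by
  simp [sim, Ordinal.limitRecOn_limit _ _ _ _ hα]

lemma sim_const_zero_iff {a b : A.carrier} : A.sim 0 (.const a) (.const b) ↔ a = b := by
  simp [sim_zero_iff, KEq]

lemma sim_const_one_iff {f g : A.carrier} :
    A.sim 1 (.const f) (.const g) ↔ ∀ x, A.app f x = A.app g x := by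
  rw [← zero_add 1, sim_add_one_iff]
  simp [sim_zero_iff, KEq]

lemma sim_congr_eval (α : Ordinal) {s t s' t' : Term A}
    (hs : s.eval = s'.eval) (ht : t.eval = t'.eval) : A.sim α s t ↔ A.sim α s' t' := by
  induction α using Ordinal.limitRecOn generalizing s t s' t' with
  | zero => simp only [sim_zero_iff, KEq, hs, ht]
  | add_one β ih =>
    simp only [sim_add_one_iff]
    exact forall_congr' fun x => ih (by simp [Term.eval, hs]) (by simp [Term.eval, ht])
  | limit β hβ ih =>
    simp only [sim_limit_iff hβ]
    exact exists_congr fun γ => and_congr_right fun hγ => ih γ hγ hs ht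

lemma sim_add_one_of_sim {α : Ordinal} {s t : Term A} (h : A.sim α s t) :
    A.sim (α + 1) s t := by
  induction α using Ordinal.limitRecOn generalizing s t with
  | zero =>
    rw [sim_zero_iff, KEq] at h
    exact sim_add_one_iff.2 fun x => sim_zero_iff.2 (by simp [KEq, Term.eval, h])
  | add_one β ih =>
    exact sim_add_one_iff.2 fun x => ih (sim_add_one_iff.1 h x)
  | limit β hβ ih =>
    obtain ⟨γ, hγ, hγst⟩ := (sim_limit_iff hβ).1 h
    exact sim_add_one_iff.2 fun x =>
      (sim_limit_iff hβ).2 ⟨γ, hγ, sim_add_one_iff.1 (ih γ hγ hγst) x⟩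

lemma sim_mono {α β : Ordinal} (hαβ : α ≤ β) {s t : Term A} (h : A.sim α s t) :
    A.sim β s t := by
  induction β using Ordinal.limitRecOn with
  | zero => rwa [nonpos_iff_eq_zero.1 hαβ] at h
  | add_one β ih =>
    rcases hαβ.eq_or_lt with rfl | hlt
    · exact h
    · exact sim_add_one_of_sim (ih (Order.le_of_lt_add_one hlt))
  | limit β hβ ih =>
    rcases hαβ.eq_or_lt with rfl | hlt
    · exact h
    · exact (sim_limit_iff hβ).2 ⟨α, hlt, h⟩

end PAS

namespace PCA

variable {A : PCA}

lemma app_K_dom (a : A.carrier) : (A.app A.K a).Dom := by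
  have h : ((A.app A.K a).bind fun x => A.app x a).Dom := by
    rw [A.K_spec a a]
    trivial
  exact h.fst

noncomputable def constFun (a : A.carrier) : A.carrier :=
  (A.app A.K a).get (app_K_dom a)

lemma app_K (a : A.carrier) : A.app A.K a = Part.some (constFun a) :=
  Part.get_eq_iff_eq_some.1 rfl

lemma app_constFun (a b : A.carrier) : A.app (constFun a) b = Part.some a := by
  have h := A.K_spec a b
  rwa [app_K, Part.bind_some] at h

lemma sim_constFun_iff {α : Ordinal} {a b : A.carrier} :
    A.sim (α + 1) (.const (constFun a)) (.const (constFun b)) ↔ A.sim α (.const a) (.const b) := by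
  have eval_app (c x : A.carrier) :
      ((PAS.Term.const (constFun c)).app (.const x)).eval = (PAS.Term.const c).eval := by
    simp [app_constFun]
  rw [PAS.sim_add_one_iff]
  exact ⟨fun h => (PAS.sim_congr_eval α (eval_app a A.K) (eval_app b A.K)).1 (h A.K),
    fun h x => (PAS.sim_congr_eval α (eval_app a x) (eval_app b x)).2 h⟩

lemma sim_iterate_constFun_iff {α : Ordinal} {a b : A.carrier} (n : ℕ) :
    A.sim (α + n) (.const (constFun^[n] a)) (.const (constFun^[n] b)) ↔
      A.sim α (.const a) (.const b) := by
  induction n with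
  | zero => simp
  | succ n ih =>
    rw [Nat.cast_succ, ← add_assoc, Function.iterate_succ_apply', Function.iterate_succ_apply',
      sim_constFun_iff, ih]

lemma exists_sim_add_one_not_sim (h : ¬ A.Extensional) (n : ℕ) :
    ∃ f g : A.carrier, A.sim ((n : Ordinal) + 1) (.const f) (.const g) ∧
      ¬ A.sim (n : Ordinal) (.const f) (.const g) := by
  obtain ⟨f, g, happ, hne⟩ : ∃ f g : A.carrier, (∀ x, A.app f x = A.app g x) ∧ f ≠ g := by
    simpa [Extensional] using h
  refine ⟨constFun^[n] f, constFun^[n] g, ?_, ?_⟩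
  · rw [show (n : Ordinal) + 1 = 1 + n by norm_cast; omega, sim_iterate_constFun_iff]
    exact PAS.sim_const_one_iff.2 happ
  · rw [← zero_add (n : Ordinal), sim_iterate_constFun_iff]
    exact PAS.sim_const_zero_iff.not.2 hne

end PCA

/-- If a pca A is not extensional, then the relations ∼_α for α ≤ ω are
pairwise distinct even restricted to elements of A; in particular for each n there
are f, g ∈ A with f ∼_{n+1} g but f ≁_n g. -/
theorem stmt4 (A : PCA) (h : ¬ A.Extensional) :
    (∀ α β : Ordinal, α < β → β ≤ Ordinal.omega0 →
      ∃ f g : A.carrier,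
        A.toPAS.sim β (.const f) (.const g) ∧ ¬ A.toPAS.sim α (.const f) (.const g)) ∧
    (∀ n : ℕ, ∃ f g : A.carrier,
      A.toPAS.sim ((n : Ordinal) + 1) (.const f) (.const g) ∧
      ¬ A.toPAS.sim (n : Ordinal) (.const f) (.const g)) := by
  refine ⟨fun α β hαβ hβω => ?_, PCA.exists_sim_add_one_not_sim h⟩
  obtain ⟨n, rfl⟩ := Ordinal.lt_omega0.1 (hαβ.trans_le hβω)
  obtain ⟨f, g, hsim, hnot⟩ := PCA.exists_sim_add_one_not_sim h n
  exact ⟨f, g, PAS.sim_mono (Order.add_one_le_of_lt hαβ) hsim, hnot⟩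
end

section
/- For every pca A there exists an ordinal α such that ∼_α equals ∼_{α+1} (and hence ∼_γ = ∼_α for all γ ≥ α). Moreover, the least such ordinal is either 0 or a limit ordinal. -/
/-!
The relations `∼_α` increase with `α`, and they all live in the set of binary relations on
closed terms, so by a cardinality argument they cannot strictly increase forever. Since
`∼_{α+1}` is determined by `∼_α`, once two consecutive stages agree the sequence is constant.
If the least stabilisation point were a successor `β + 1`, then `∼_{β+1} = ∼_{β+2}` would give
`∼_β = ∼_{β+1}`, because `s ∼_β t ↔ K·s ∼_{β+1} K·t`, contradicting minimality.
-/

universe u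

theorem Ordinal.exists_eq_add_one_of_monotone {β : Type*} [PartialOrder β] [Small.{u} β]
    {f : Ordinal.{u} → β} (hf : Monotone f) : ∃ α, f α = f (α + 1) := by
  by_contra! hne
  have hstrict : StrictMono f := fun α γ hαγ =>
    ((hf (lt_add_one α).le).lt_of_ne (hne α)).trans_le (hf (Order.add_one_le_of_lt hαγ))
  exact not_injective_of_ordinal f hstrict.injective

namespace PAS

variable {A : PAS}

theorem sim_zero : A.sim 0 = KEq := by
  funext s t
  rw [sim, Ordinal.limitRecOn_zero]

theorem sim_add_one (α : Ordinal) (s t : Term A) :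
    A.sim (α + 1) s t ↔ ∀ x : A.carrier, A.sim α (s.app (.const x)) (t.app (.const x)) := by
  rw [sim, Ordinal.limitRecOn_add_one]
  rfl

theorem sim_of_isSuccLimit {α : Ordinal} (h : Order.IsSuccLimit α) (s t : Term A) :
    A.sim α s t ↔ ∃ γ < α, A.sim γ s t := by
  rw [sim, Ordinal.limitRecOn_limit _ _ _ _ h]
  simp only [sim, exists_prop]

theorem KEq.app {s s' t t' : Term A} (hs : KEq s s') (ht : KEq t t') :
    KEq (s.app t) (s'.app t') := by
  simp only [KEq, Term.eval] at *
  rw [hs, ht]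

theorem sim_congr (α : Ordinal) {s s' t t' : Term A} (hs : KEq s s') (ht : KEq t t') :
    A.sim α s t ↔ A.sim α s' t' := by
  induction α using Ordinal.limitRecOn generalizing s s' t t' with
  | zero => rw [sim_zero, KEq, KEq, hs, ht]
  | add_one β ih =>
    simp only [sim_add_one]
    exact forall_congr' fun x => ih (hs.app rfl) (ht.app rfl)
  | limit β hβ ih =>
    simp only [sim_of_isSuccLimit hβ]
    exact exists_congr fun γ => and_congr_right fun hγ => ih γ hγ hs ht

theorem sim.app_const {α : Ordinal} {s t : Term A} (h : A.sim α s t) (x : A.carrier) :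
    A.sim α (s.app (.const x)) (t.app (.const x)) := by
  induction α using Ordinal.limitRecOn generalizing s t x with
  | zero => rw [sim_zero] at *; exact h.app rfl
  | add_one β ih =>
    rw [sim_add_one] at *
    exact fun y => ih (h x) y
  | limit β hβ ih =>
    rw [sim_of_isSuccLimit hβ] at *
    obtain ⟨γ, hγ, h⟩ := h
    exact ⟨γ, hγ, ih γ hγ h x⟩

theorem sim_le_sim_add_one (α : Ordinal) : A.sim α ≤ A.sim (α + 1) :=
  fun _ _ h => (sim_add_one α _ _).mpr h.app_const

theorem sim_mono_s5 : Monotone A.sim := by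
  intro β α hβα
  induction α using Ordinal.limitRecOn with
  | zero => rw [nonpos_iff_eq_zero.mp hβα]
  | add_one α ih =>
    rcases hβα.eq_or_lt with rfl | hlt
    · exact le_rfl
    · exact (ih (Order.lt_add_one_iff.mp hlt)).trans (sim_le_sim_add_one α)
  | limit α hα =>
    rcases hβα.eq_or_lt with rfl | hlt
    · exact le_rfl
    · exact fun s t h => (sim_of_isSuccLimit hα s t).mpr ⟨β, hlt, h⟩

theorem exists_sim_eq_sim_add_one : ∃ α : Ordinal.{u}, A.sim α = A.sim (α + 1) :=
  Ordinal.exists_eq_add_one_of_monotone sim_mono_s5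

theorem sim_add_one_congr {α β : Ordinal} (h : A.sim α = A.sim β) :
    A.sim (α + 1) = A.sim (β + 1) := by
  funext s t
  simp only [sim_add_one, h]

theorem sim_eq_of_le {α γ : Ordinal} (hfix : A.sim α = A.sim (α + 1)) (hαγ : α ≤ γ) :
    A.sim γ = A.sim α := by
  induction γ using Ordinal.limitRecOn with
  | zero => rw [nonpos_iff_eq_zero.mp hαγ]
  | add_one δ ih =>
    rcases hαγ.eq_or_lt with rfl | hlt
    · rfl
    · rw [sim_add_one_congr (ih (Order.lt_add_one_iff.mp hlt)), ← hfix]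
  | limit γ hγ ih =>
    refine le_antisymm (fun s t h => ?_) (sim_mono_s5 hαγ)
    obtain ⟨β, hβγ, h⟩ := (sim_of_isSuccLimit hγ s t).mp h
    rcases le_total β α with hβα | hαβ
    · exact sim_mono_s5 hβα s t h
    · rwa [← ih β hβγ hαβ]

end PAS

namespace PCA

open PAS

variable (A : PCA)

theorem keq_K_app (s : Term A.toPAS) (x : A.carrier) :
    KEq (((Term.const A.K).app s).app (.const x)) s := by
  simp only [KEq, Term.eval, bind, Part.bind_some, Part.bind_assoc]
  simp [A.K_spec]

theorem sim_iff_sim_add_one_K (α : Ordinal) (s t : Term A.toPAS) :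
    A.sim α s t ↔ A.sim (α + 1) ((Term.const A.K).app s) ((Term.const A.K).app t) := by
  rw [sim_add_one]
  exact ⟨fun h x => (sim_congr α (A.keq_K_app s x) (A.keq_K_app t x)).mpr h,
    fun h => (sim_congr α (A.keq_K_app s A.K) (A.keq_K_app t A.K)).mp (h A.K)⟩

theorem sim_eq_sim_add_one_of_add_one {β : Ordinal}
    (h : A.sim (β + 1) = A.sim (β + 1 + 1)) : A.sim β = A.sim (β + 1) := by
  refine le_antisymm (sim_le_sim_add_one β) fun s t hst => ?_
  rw [A.sim_iff_sim_add_one_K, h]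
  exact (A.sim_iff_sim_add_one_K (β + 1) s t).mp hst

end PCA

/-- For every pca A there is an ordinal α with ∼_α = ∼_{α+1} (and then
∼_γ = ∼_α for all γ ≥ α); moreover the least such α is 0 or a limit ordinal. -/
theorem stmt5 (A : PCA) :
    (∃ α : Ordinal, A.toPAS.sim α = A.toPAS.sim (α + 1) ∧
      ∀ γ : Ordinal, α ≤ γ → A.toPAS.sim γ = A.toPAS.sim α) ∧
    (∀ α : Ordinal, IsLeast {β : Ordinal | A.toPAS.sim β = A.toPAS.sim (β + 1)} α →
      α = 0 ∨ Order.IsSuccLimit α) := by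
  refine ⟨?_, fun α ⟨hfix, hleast⟩ => ?_⟩
  · obtain ⟨α, hα⟩ := PAS.exists_sim_eq_sim_add_one (A := A.toPAS)
    exact ⟨α, hα, fun γ => PAS.sim_eq_of_le hα⟩
  rcases Ordinal.zero_or_succ_or_isSuccLimit α with rfl | ⟨β, rfl⟩ | hlim
  · exact .inl rfl
  · rw [Order.succ_eq_add_one] at hfix hleast
    have hβ := hleast (A.sim_eq_sim_add_one_of_add_one hfix)
    exact absurd hβ (lt_add_one β).not_ge
  · exact .inr hlim
end

section
/- For every X, Y ⊆ ω: the relativized Kleene model K_1^X embeds into K_1^Y if and only if X ≤_T Y; moreover when X ≤_T Y the embedding can be chosen computable. -/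
/-- Codes for oracle Turing machines (partial recursive functions relative to an oracle). -/
inductive OCode : Type
  | zero | succ | left | right | oracle
  | pair (a b : OCode) | comp (a b : OCode) | prec (a b : OCode) | rfind' (a : OCode)

/-- Evaluation of an oracle code relative to the oracle O. -/
def evalo (O : ℕ →. ℕ) : OCode → ℕ →. ℕ
  | .zero => pure 0
  | .succ => fun n => Part.some (n + 1)
  | .left => fun n => Part.some n.unpair.1
  | .right => fun n => Part.some n.unpair.2
  | .oracle => O
  | .pair cf cg => fun n => Nat.pair <$> evalo O cf n <*> evalo O cg n
  | .comp cf cg => fun n => evalo O cg n >>= evalo O cf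
  | .prec cf cg => fun n =>
      n.unpair.2.rec (evalo O cf n.unpair.1) fun y IH => do
        let i ← IH
        evalo O cg (Nat.pair n.unpair.1 (Nat.pair y i))
  | .rfind' cf => fun n =>
      (Nat.rfind fun m =>
        (fun x => x = 0) <$> evalo O cf (Nat.pair n.unpair.1 (m + n.unpair.2))).map
        (· + n.unpair.2)

/-- A numbering of the oracle codes by natural numbers. -/
def ocodeOfNat : ℕ → OCode
  | 0 => .zero
  | 1 => .succ
  | 2 => .left
  | 3 => .right
  | 4 => .oracle
  | (n + 5) =>
    match n.unpair.1 % 4 with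
    | 0 => .pair (ocodeOfNat n.unpair.2.unpair.1) (ocodeOfNat n.unpair.2.unpair.2)
    | 1 => .comp (ocodeOfNat n.unpair.2.unpair.1) (ocodeOfNat n.unpair.2.unpair.2)
    | 2 => .prec (ocodeOfNat n.unpair.2.unpair.1) (ocodeOfNat n.unpair.2.unpair.2)
    | _ => .rfind' (ocodeOfNat n.unpair.2)
  decreasing_by
    all_goals
      have h1 : n.unpair.2 ≤ n := Nat.unpair_right_le n
      have h2 : n.unpair.2.unpair.1 ≤ n.unpair.2 := Nat.unpair_left_le _
      have h3 : n.unpair.2.unpair.2 ≤ n.unpair.2 := Nat.unpair_right_le _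
      omega

open Classical in
/-- The characteristic function of a set of naturals, as a partial function. -/
noncomputable def chi (X : Set ℕ) : ℕ →. ℕ :=
  fun n => Part.some (if n ∈ X then 1 else 0)

/-- The relativized Kleene model K₁^X: the pca on ω with application n·m = Φ_n^X(m). -/
noncomputable def K1X (X : Set ℕ) : PAS :=
  ⟨ℕ, fun n m => evalo (chi X) (ocodeOfNat n) m⟩

/-- Turing reducibility: X ≤_T Y iff the characteristic function of X is partial
computable relative to (an oracle for) Y. -/
noncomputable def TuringRed (X Y : Set ℕ) : Prop :=
  ∃ c : OCode, ∀ n : ℕ, evalo (chi Y) c n = chi X n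

/-- An embedding of partial applicative structures: an injection preserving defined
applications and preserving undefinedness. -/
def PAS.IsEmbedding (A B : PAS) (F : A.carrier → B.carrier) : Prop :=
  Function.Injective F ∧
    ∀ a b : A.carrier,
      (∀ c : A.carrier, A.app a b = Part.some c → B.app (F a) (F b) = Part.some (F c)) ∧
      (¬ (A.app a b).Dom → ¬ (B.app (F a) (F b)).Dom)

/-!
If `F` embeds `K₁^X` into `K₁^Y`, then, as `1` and `4` index the successor and the oracle call,
`F (k + 1) = F 1 · F k`, so `F` is `Y`-computable, and `F 4 · F n = F (χ_X n)` with `F 0 ≠ F 1`,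
so `X ≤_T Y`.

Conversely, replacing the oracle calls of an `X`-code by a reduction of `X` to `Y` gives a `Y`-code
with the same behaviour, computably in the index. By the recursion theorem there is a computable `F`
such that `F n` is a code that recovers `m` from `F m`, runs the translated code `n` on it and
applies `F` to the result; the number `n` is stored in otherwise ignored bits of the index `F n`,
which makes `F` injective.
-/

open Nat.Partrec (Code)

namespace OCode

def encode : OCode → ℕ
  | zero => 0
  | succ => 1
  | left => 2
  | right => 3
  | oracle => 4
  | pair a b => Nat.pair 0 (Nat.pair a.encode b.encode) + 5
  | comp a b => Nat.pair 1 (Nat.pair a.encode b.encode) + 5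
  | prec a b => Nat.pair 2 (Nat.pair a.encode b.encode) + 5
  | rfind' a => Nat.pair 3 a.encode + 5

def ofCode : Code → OCode
  | .zero => zero
  | .succ => succ
  | .left => left
  | .right => right
  | .pair a b => pair (ofCode a) (ofCode b)
  | .comp a b => comp (ofCode a) (ofCode b)
  | .prec a b => prec (ofCode a) (ofCode b)
  | .rfind' a => rfind' (ofCode a)

def subst : OCode → OCode → OCode
  | zero, _ => zero
  | succ, _ => succ
  | left, _ => left
  | right, _ => right
  | oracle, d => d
  | pair a b, d => pair (a.subst d) (b.subst d)
  | comp a b, d => comp (a.subst d) (b.subst d)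
  | prec a b, d => prec (a.subst d) (b.subst d)
  | rfind' a, d => rfind' (a.subst d)

protected def id : OCode := pair left right

def const : ℕ → OCode
  | 0 => zero
  | n + 1 => comp succ (const n)

end OCode

theorem ocodeOfNat_add_five (m : ℕ) : ocodeOfNat (m + 5) =
    match m.unpair.1 % 4 with
    | 0 => .pair (ocodeOfNat m.unpair.2.unpair.1) (ocodeOfNat m.unpair.2.unpair.2)
    | 1 => .comp (ocodeOfNat m.unpair.2.unpair.1) (ocodeOfNat m.unpair.2.unpair.2)
    | 2 => .prec (ocodeOfNat m.unpair.2.unpair.1) (ocodeOfNat m.unpair.2.unpair.2)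
    | _ => .rfind' (ocodeOfNat m.unpair.2) := by
  rw [ocodeOfNat]

@[simp]
theorem ocodeOfNat_encode (c : OCode) : ocodeOfNat c.encode = c := by
  induction c with
  | pair a b iha ihb | comp a b iha ihb | prec a b iha ihb =>
    simp [OCode.encode, ocodeOfNat_add_five, iha, ihb]
  | rfind' a iha => simp [OCode.encode, ocodeOfNat_add_five, iha]
  | _ => rw [OCode.encode, ocodeOfNat]

theorem ocodeOfNat_one : ocodeOfNat 1 = .succ := by rw [ocodeOfNat]

theorem ocodeOfNat_four : ocodeOfNat 4 = .oracle := by rw [ocodeOfNat]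

section evalo

variable (O : ℕ →. ℕ)

theorem evalo_comp (a b : OCode) (n : ℕ) :
    evalo O (.comp a b) n = (evalo O b n).bind fun x => evalo O a x := rfl

theorem evalo_pair (a b : OCode) (n : ℕ) :
    evalo O (.pair a b) n = (evalo O a n).bind fun x => (evalo O b n).map (Nat.pair x) := by
  simp [evalo, Seq.seq, Part.bind_map]

@[simp]
theorem evalo_zero (n : ℕ) : evalo O .zero n = Part.some 0 := rfl

@[simp]
theorem evalo_right (n : ℕ) : evalo O .right n = Part.some n.unpair.2 := rfl

@[simp]
theorem evalo_id (n : ℕ) : evalo O OCode.id n = Part.some n := by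
  simp [OCode.id, evalo_pair, evalo]

@[simp]
theorem evalo_const (k n : ℕ) : evalo O (OCode.const k) n = Part.some k := by
  induction k with
  | zero => rfl
  | succ k ih => simp [OCode.const, evalo_comp, ih]; rfl

theorem evalo_prec_zero (a b : OCode) (x : ℕ) :
    evalo O (.prec a b) (Nat.pair x 0) = evalo O a x := by
  simp [evalo]

theorem evalo_prec_succ (a b : OCode) (x k : ℕ) :
    evalo O (.prec a b) (Nat.pair x (k + 1)) =
      (evalo O (.prec a b) (Nat.pair x k)).bind fun i => evalo O b (Nat.pair x (Nat.pair k i)) := by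
  simp only [evalo, Nat.unpair_pair]
  rfl

theorem evalo_ofCode (c : Code) : evalo O (OCode.ofCode c) = c.eval := by
  induction c with
  | pair a b iha ihb | comp a b iha ihb =>
    funext n; simp only [OCode.ofCode, evalo, Code.eval, iha, ihb]
  | prec a b iha ihb => funext n; simp only [OCode.ofCode, evalo, Code.eval, iha, ihb, Nat.unpaired]
  | rfind' a iha => funext n; simp only [OCode.ofCode, evalo, Code.eval, iha, Nat.unpaired]
  | _ => rfl

theorem evalo_subst (c d : OCode) : evalo O (c.subst d) = evalo (evalo O d) c := by
  induction c with
  | pair a b iha ihb | comp a b iha ihb | prec a b iha ihb =>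
    funext n; simp only [OCode.subst, evalo, iha, ihb]
  | rfind' a iha => funext n; simp only [OCode.subst, evalo, iha]
  | _ => rfl

end evalo

def OComputable (O : ℕ →. ℕ) (f : ℕ → ℕ) : Prop :=
  ∃ c : OCode, ∀ n, evalo O c n = Part.some (f n)

namespace OComputable

variable {O : ℕ →. ℕ} {f g : ℕ → ℕ}

theorem of_computable (hf : Computable f) : OComputable O f := by
  obtain ⟨c, hc⟩ := Code.exists_code.1 (Partrec.nat_iff.1 hf.partrec)
  exact ⟨.ofCode c, fun n => by rw [evalo_ofCode, hc]; rfl⟩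

theorem of_code_map (hf : OComputable O f) {c : OCode}
    (hc : ∀ n, evalo O c (f n) = Part.some (g n)) : OComputable O g := by
  obtain ⟨cf, hcf⟩ := hf
  exact ⟨.comp c cf, fun n => by rw [evalo_comp, hcf, Part.bind_some, hc]⟩

theorem comp (hg : OComputable O g) (hf : OComputable O f) : OComputable O (g ∘ f) :=
  let ⟨_, hc⟩ := hg
  hf.of_code_map fun n => hc (f n)

theorem of_step {c : OCode} (hc : ∀ k, evalo O c (f k) = Part.some (f (k + 1))) :
    OComputable O f := by
  set r : OCode := .prec (.const (f 0)) (.comp c (.comp .right .right))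
  have hr : ∀ k, evalo O r (Nat.pair 0 k) = Part.some (f k) := by
    intro k
    induction k with
    | zero => rw [evalo_prec_zero, evalo_const]
    | succ k ih => simp [r, evalo_prec_succ, ih, evalo_comp, hc]
  exact ⟨.comp r (.pair .zero .id), fun n => by simp [evalo_comp, evalo_pair, hr]⟩

end OComputable

theorem TuringRed.of_isEmbedding {X Y : Set ℕ} {F : ℕ → ℕ}
    (hF : PAS.IsEmbedding (K1X X) (K1X Y) F) : TuringRed X Y := by
  classical
  have happ : ∀ a b c, evalo (chi X) (ocodeOfNat a) b = Part.some c →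
      evalo (chi Y) (ocodeOfNat (F a)) (F b) = Part.some (F c) :=
    fun a b => (hF.2 a b).1
  have hsucc : ∀ k, evalo (chi Y) (ocodeOfNat (F 1)) (F k) = Part.some (F (k + 1)) :=
    fun k => happ 1 k (k + 1) (by rw [ocodeOfNat_one]; rfl)
  have horacle : ∀ n, evalo (chi Y) (ocodeOfNat (F 4)) (F n) =
      Part.some (F (if n ∈ X then 1 else 0)) :=
    fun n => happ 4 n _ (by rw [ocodeOfNat_four]; rfl)
  have hdecide : Computable fun m => if m = F 1 then 1 else 0 :=
    (Primrec.ite (Primrec.eq.comp Primrec.id (Primrec.const (F 1))) (Primrec.const 1)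
      (Primrec.const 0)).to_comp
  obtain ⟨c, hc⟩ :=
    (OComputable.of_computable (O := chi Y) hdecide).comp
      ((OComputable.of_step hsucc).of_code_map horacle)
  have hF01 : F 0 ≠ F 1 := fun h => Nat.zero_ne_one (hF.1 h)
  refine ⟨c, fun n => ?_⟩
  by_cases hn : n ∈ X <;> simp [hc, chi, hn, hF01]

def substEncodeStep (d : OCode) (l : List ℕ) : ℕ :=
  let n := l.length
  let m := n - 5
  if n < 4 then n
  else if n = 4 then d.encode
  -- `encode` tags `pair`, `comp`, `prec` by `0, 1, 2`, the residues `ocodeOfNat` reads here.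
  else if m.unpair.1 % 4 = 3 then Nat.pair 3 (l.getD m.unpair.2 0) + 5
  else Nat.pair (m.unpair.1 % 4)
    (Nat.pair (l.getD m.unpair.2.unpair.1 0) (l.getD m.unpair.2.unpair.2 0)) + 5

theorem primrec_substEncodeStep (d : OCode) : Primrec (substEncodeStep d) := by
  have hm : Primrec fun l : List ℕ => l.length - 5 :=
    Primrec.nat_sub.comp Primrec.list_length (Primrec.const 5)
  have h1 := Primrec.fst.comp (Primrec.unpair.comp hm)
  have h2 := Primrec.snd.comp (Primrec.unpair.comp hm)
  have htag := Primrec.nat_mod.comp h1 (Primrec.const 4)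
  have hget : ∀ {i : List ℕ → ℕ}, Primrec i → Primrec fun l : List ℕ => l.getD (i l) 0 :=
    fun hi => (Primrec.list_getD 0).comp Primrec.id hi
  have hpair5 : ∀ {a b : List ℕ → ℕ}, Primrec a → Primrec b →
      Primrec fun l => Nat.pair (a l) (b l) + 5 :=
    fun ha hb => Primrec.nat_add.comp (Primrec₂.natPair.comp ha hb) (Primrec.const 5)
  exact Primrec.ite (Primrec.nat_lt.comp Primrec.list_length (Primrec.const 4))
    Primrec.list_length
    (Primrec.ite (Primrec.eq.comp Primrec.list_length (Primrec.const 4)) (Primrec.const _)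
      (Primrec.ite (Primrec.eq.comp htag (Primrec.const 3))
        (hpair5 (Primrec.const 3) (hget h2))
        (hpair5 htag (Primrec₂.natPair.comp (hget (Primrec.fst.comp (Primrec.unpair.comp h2)))
          (hget (Primrec.snd.comp (Primrec.unpair.comp h2)))))))

theorem substEncodeStep_range (d : OCode) (n : ℕ) :
    substEncodeStep d ((List.range n).map fun i => ((ocodeOfNat i).subst d).encode) =
      ((ocodeOfNat n).subst d).encode := by
  have hget : ∀ i < n, ((List.range n).map fun i => ((ocodeOfNat i).subst d).encode).getD i 0 =
      ((ocodeOfNat i).subst d).encode := fun i hi => by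
    rw [List.getD_eq_getElem _ _ (by simpa using hi)]
    simp
  match n with
  | 0 | 1 | 2 | 3 | 4 => simp [substEncodeStep, ocodeOfNat, OCode.subst, OCode.encode]
  | m + 5 =>
    have h1 := Nat.unpair_left_le m
    have h2 := Nat.unpair_right_le m
    have h21 := Nat.unpair_left_le m.unpair.2
    have h22 := Nat.unpair_right_le m.unpair.2
    have htag : m.unpair.1 % 4 < 4 := Nat.mod_lt _ (by norm_num)
    simp only [substEncodeStep, List.length_map, List.length_range, Nat.add_sub_cancel,
      hget _ (by omega : m.unpair.2 < m + 5), hget _ (by omega : m.unpair.2.unpair.1 < m + 5),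
      hget _ (by omega : m.unpair.2.unpair.2 < m + 5), ocodeOfNat_add_five]
    interval_cases m.unpair.1 % 4 <;> simp [OCode.subst, OCode.encode]

theorem computable_encode_subst (d : OCode) :
    Computable fun n => ((ocodeOfNat n).subst d).encode :=
  (Computable.nat_strong_rec (fun (_ : Unit) n => ((ocodeOfNat n).subst d).encode)
    (g := fun _ l => some (substEncodeStep d l))
    (Computable.option_some.comp ((primrec_substEncodeStep d).to_comp.comp Computable.snd))
    fun _ n => by rw [substEncodeStep_range]).comp (Computable.const ()) Computable.id

/-- An index of `comp a b` that also carries the number `t`: `ocodeOfNat` reads only the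
constructor tag modulo `4`, so the quotient of the tag by `4` is free. -/
def compIdx (t : ℕ) (a b : OCode) : ℕ :=
  Nat.pair (4 * t + 1) (Nat.pair a.encode b.encode) + 5

def compIdxTag (i : ℕ) : ℕ := (i - 5).unpair.1 / 4

@[simp]
theorem ocodeOfNat_compIdx (t : ℕ) (a b : OCode) : ocodeOfNat (compIdx t a b) = .comp a b := by
  simp [compIdx, ocodeOfNat_add_five]

@[simp]
theorem compIdxTag_compIdx (t : ℕ) (a b : OCode) : compIdxTag (compIdx t a b) = t := by
  simp only [compIdxTag, compIdx, Nat.add_sub_cancel, Nat.unpair_pair]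
  omega

theorem OCode.encode_comp (a b : OCode) : (OCode.comp a b).encode = compIdx 0 a b := rfl

theorem primrec_compIdxTag : Primrec compIdxTag :=
  Primrec.nat_div.comp (Primrec.fst.comp (Primrec.unpair.comp
    (Primrec.nat_sub.comp Primrec.id (Primrec.const 5)))) (Primrec.const 4)

theorem Computable.compIdx {α : Type*} [Primcodable α] {t : α → ℕ} {a b : α → OCode}
    (ht : Computable t) (ha : Computable fun x => (a x).encode)
    (hb : Computable fun x => (b x).encode) : Computable fun x => compIdx (t x) (a x) (b x) :=
  Primrec.nat_add.to_comp.comp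
    (Primrec₂.natPair.to_comp.comp
      (Primrec.nat_add.to_comp.comp (Primrec.nat_mul.to_comp.comp (Computable.const 4) ht)
        (Computable.const 1))
      (Primrec₂.natPair.to_comp.comp ha hb))
    (Computable.const 5)

theorem primrec_encode_const : Primrec fun k => (OCode.const k).encode := by
  refine (Primrec.nat_rec₁ 0 (f := fun _ e => Nat.pair 1 (Nat.pair 1 e) + 5)
    (Primrec.nat_add.comp (Primrec₂.natPair.comp (Primrec.const 1)
      (Primrec₂.natPair.comp (Primrec.const 1) Primrec.snd)) (Primrec.const 5))).of_eq
    fun k => ?_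
  induction k with
  | zero => rfl
  | succ k ih => simp only [ih]; rfl

theorem exists_ocode_eval_eq_code_eval :
    ∃ ν : ℕ → OCode, Computable (fun k => (ν k).encode) ∧
      ∀ (O : ℕ →. ℕ) (c : Code), evalo O (ν (Encodable.encode c)) = c.eval := by
  obtain ⟨u, hu⟩ := Code.exists_code.1 <| Partrec.nat_iff.1 <|
    Code.eval_part.comp ((Computable.ofNat Code).comp (Computable.fst.comp Computable.unpair))
      (Computable.snd.comp Computable.unpair)
  refine ⟨fun k => .comp (.ofCode u) (.pair (.const k) .id), ?_, fun O c => funext fun x => ?_⟩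
  · simp only [OCode.encode_comp]
    refine Computable.compIdx (Computable.const 0) (Computable.const _) ?_
    exact Primrec.nat_add.to_comp.comp (Primrec₂.natPair.to_comp.comp (Computable.const 0)
      (Primrec₂.natPair.to_comp.comp primrec_encode_const.to_comp (Computable.const _)))
      (Computable.const 5)
  · simp [evalo_comp, evalo_pair, evalo_ofCode, hu]

theorem exists_computable_injective_evalo_map {O O' : ℕ →. ℕ} (σ : ℕ → OCode)
    (hσ : Computable fun n => (σ n).encode)
    (hsim : ∀ n, evalo O' (σ n) = evalo O (ocodeOfNat n)) :
    ∃ F : ℕ → ℕ, Computable F ∧ Function.Injective F ∧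
      ∀ a b, evalo O' (ocodeOfNat (F a)) (F b) = (evalo O (ocodeOfNat a) b).map F := by
  obtain ⟨ν, hν, hνeval⟩ := exists_ocode_eval_eq_code_eval
  obtain ⟨g, hg⟩ := Code.exists_code.1 (Partrec.nat_iff.1 primrec_compIdxTag.to_comp.partrec)
  set Φ : ℕ → ℕ → ℕ := fun k n => compIdx n (ν k) (.comp (σ n) (.ofCode g))
  have hΦ : Computable₂ Φ :=
    Computable.compIdx Computable.snd (hν.comp Computable.fst) <| by
      simpa only [OCode.encode_comp] using
        Computable.compIdx (Computable.const 0) (hσ.comp Computable.snd) (Computable.const _)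
  obtain ⟨c, hc⟩ := Code.fixed_point₂ (f := fun c n => Part.some (Φ (Encodable.encode c) n))
    (hΦ.comp (Computable.encode.comp Computable.fst) Computable.snd).partrec
  have hF : ∀ x, evalo O' (ν (Encodable.encode c)) x = Part.some (Φ (Encodable.encode c) x) := by
    simp [hνeval, hc]
  refine ⟨Φ (Encodable.encode c), hΦ.comp (Computable.const _) Computable.id,
    fun a b hab => by simpa [Φ] using congrArg compIdxTag hab, fun a b => ?_⟩
  simp [Φ, evalo_comp, evalo_ofCode, hg, hsim, hF, Part.bind_some_eq_map]

theorem PAS.isEmbedding_of_app_eq_map {A B : PAS} {F : A.carrier → B.carrier}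
    (hinj : Function.Injective F) (happ : ∀ a b, B.app (F a) (F b) = (A.app a b).map F) :
    PAS.IsEmbedding A B F :=
  ⟨hinj, fun a b =>
    ⟨fun c h => by rw [happ, h, Part.map_some], fun h => by rwa [happ, Part.map_Dom]⟩⟩

theorem TuringRed.exists_isEmbedding_computable {X Y : Set ℕ} (h : TuringRed X Y) :
    ∃ F : ℕ → ℕ, PAS.IsEmbedding (K1X X) (K1X Y) F ∧ Computable F := by
  obtain ⟨c₀, hc₀⟩ := h
  obtain ⟨F, hFc, hinj, happ⟩ := exists_computable_injective_evalo_map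
    (fun n => (ocodeOfNat n).subst c₀) (computable_encode_subst c₀)
    (fun n => by rw [evalo_subst, funext hc₀])
  exact ⟨F, PAS.isEmbedding_of_app_eq_map hinj happ, hFc⟩

/-- K₁^X embeds into K₁^Y iff X ≤_T Y; moreover when X ≤_T Y the
embedding can be chosen computable. -/
theorem stmt17 (X Y : Set ℕ) :
    ((∃ F : ℕ → ℕ, PAS.IsEmbedding (K1X X) (K1X Y) F) ↔ TuringRed X Y) ∧
    (TuringRed X Y →
      ∃ F : ℕ → ℕ, PAS.IsEmbedding (K1X X) (K1X Y) F ∧ Computable F) := by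
  exact ⟨⟨fun ⟨_, hF⟩ => TuringRed.of_isEmbedding hF,
    fun h => h.exists_isEmbedding_computable.imp fun _ => And.left⟩,
    TuringRed.exists_isEmbedding_computable⟩
end
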